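/- arXiv:1610.01785 — 5 statements merged into one kernel-verified Lean document; each statement's English description precedes it below -/
import Mathlib

section
/- Let d ≥ 3 and let ℓ_j(z) = m z + α_j (1 - |m|) e^{2πi j/d} for j = 1,…,d, where m ∈ ℂ with 0.98 < |m| < 1 and each α_j ∈ ℂ satisfies 3/5 < |α_j| < 1 and |arg α_j| < π/20. Then for every z in the closed disk of radius 1/10 centered at 0, there exists j ∈ {1,…,d} such that ℓ_j⁻¹(z) = (z - α_j(1-|m|)e^{2πi j/d})/m lies in the open disk of radius 1/10 centered at 0. Equivalently, the union of the images ℓ_j(D(0,1/10)) covers the closed disk of radius 1/10. -/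
/-!
Write `z = r e^{iφ}` and the translation part of `ℓ_j` as `s e^{iψ_j}`, with
`s = |α_j| (1 - |m|)` and `ψ_j = 2πj/d + arg α_j`. Choosing `j` with `2πj/d` nearest to `φ`
modulo `2π` gives `|φ - ψ_j| ≤ π/d + π/20 ≤ π/3 + π/20`, hence `cos (φ - ψ_j) > 1/3`. By the law
of cosines `|z - s e^{iψ_j}|² = r² + s² - 2rs cos (φ - ψ_j)`, which is convex in `r`; at `r = 1/10`
the gain `2rs cos (φ - ψ_j) > s/15 > (1 - |m|)/25` beats the loss `(1 - |m|)/50 + s²` incurred by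
shrinking the target radius to `|m|/10`.
-/
open Complex Real

lemma norm_ofReal_mul_exp_sub_sq (r s φ ψ : ℝ) :
    ‖(r : ℂ) * exp (φ * I) - s * exp (ψ * I)‖ ^ 2
      = r ^ 2 + s ^ 2 - 2 * r * s * Real.cos (φ - ψ) := by
  rw [Complex.sq_norm, Complex.normSq_apply]
  simp only [exp_mul_I, ← ofReal_cos, ← ofReal_sin, sub_re, sub_im, mul_re, mul_im, add_re,
    add_im, ofReal_re, ofReal_im, I_re, I_im]
  rw [Real.cos_sub]
  linear_combination r ^ 2 * Real.sin_sq_add_cos_sq φ + s ^ 2 * Real.sin_sq_add_cos_sq ψ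

lemma mul_ofReal_mul_exp_mul_I (a : ℂ) (t θ : ℝ) :
    a * t * exp (θ * I) = ↑(‖a‖ * t) * exp (↑(θ + arg a) * I) := by
  conv_lhs => rw [← norm_mul_exp_arg_mul_I a]
  push_cast
  rw [add_mul, Complex.exp_add]
  ring

lemma exists_fin_abs_sub_two_pi_mul_div_sub_le (φ : ℝ) {d : ℕ} (hd : 0 < d) :
    ∃ (j : Fin d) (k : ℤ), |φ - 2 * π * j / d - 2 * π * k| ≤ π / d := by
  set n := round (φ * d / (2 * π))
  have hd' : (0 : ℤ) < d := by exact_mod_cast hd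
  refine ⟨⟨(n % d).toNat, by have := Int.emod_lt_of_pos n hd'; omega⟩, n / d, ?_⟩
  have hn : ((n % d).toNat : ℝ) + d * (n / d : ℤ) = n := by
    rw [← Int.cast_natCast, Int.toNat_of_nonneg (Int.emod_nonneg n hd'.ne')]
    exact_mod_cast Int.emod_add_mul_ediv n d
  have hdR : (0 : ℝ) < d := by exact_mod_cast hd
  have hsplit : φ - 2 * π * ((n % d).toNat : ℝ) / d - 2 * π * (n / d : ℤ)
      = 2 * π / d * (φ * d / (2 * π) - n) := by
    rw [← hn]; field_simp; ring
  rw [Fin.val_mk, hsplit, abs_mul, abs_of_pos (by positivity)]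
  calc 2 * π / d * |φ * d / (2 * π) - n| ≤ 2 * π / d * (1 / 2) := by
        gcongr; exact abs_sub_round _
    _ = π / d := by ring

lemma one_third_lt_cos_of_abs_le {x : ℝ} (hx : |x| ≤ π / 3 + π / 20) : 1 / 3 < Real.cos x := by
  have hsin : Real.sin (π / 20) ≤ π / 20 := Real.sin_le (by positivity)
  have hcos : 1 - (π / 20) ^ 2 / 2 ≤ Real.cos (π / 20) := one_sub_sq_div_two_le_cos
  have hsqrt3 : √3 < 1.7325 := by
    rw [Real.sqrt_lt' (by norm_num)]; norm_num
  have hbound : 1 / 3 < Real.cos (π / 3 + π / 20) := by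
    rw [Real.cos_add, cos_pi_div_three, sin_pi_div_three]
    nlinarith [pi_lt_d2, pi_gt_d2, Real.sqrt_nonneg 3,
      Real.sin_nonneg_of_nonneg_of_le_pi (x := π / 20) (by positivity) (by linarith [pi_pos])]
  rw [← Real.cos_abs]
  exact hbound.trans_le
    (cos_le_cos_of_nonneg_of_le_pi (abs_nonneg x) (by linarith [pi_pos]) hx)

lemma sq_add_sq_sub_two_mul_mul_cos_lt {r s c μ : ℝ} (hr0 : 0 ≤ r) (hr : r ≤ 1 / 10)
    (hμ : 0.98 < μ) (hs1 : 3 / 5 * (1 - μ) < s) (hs2 : s < 1 - μ) (hc1 : 1 / 3 < c) (hc2 : c ≤ 1) :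
    r ^ 2 + s ^ 2 - 2 * r * s * c < (1 / 10 * μ) ^ 2 := by
  norm_num at hμ
  -- convexity in `r`: the worst case on `[0, 1/10]` is the endpoint `r = 1/10`
  have hend : r ^ 2 - 2 * r * s * c ≤ (1 / 10) ^ 2 - 2 * (1 / 10) * s * c := by
    nlinarith [mul_nonneg (sub_nonneg.2 hr) (by nlinarith : 0 ≤ 1 / 10 + r - 2 * s * c)]
  nlinarith

/-- Covering property for the affine IFS with `d ≥ 3` branches directed by the
`d`-th roots of unity: every point of the closed disk of radius `1/10` has a
preimage under some branch `ℓ_j` in the open disk of radius `1/10`. -/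
theorem stmt0 (d : ℕ) (hd : 3 ≤ d) (m : ℂ)
    (hm1 : 0.98 < ‖m‖) (hm2 : ‖m‖ < 1)
    (α : Fin d → ℂ)
    (hα1 : ∀ j, 3 / 5 < ‖α j‖)
    (hα2 : ∀ j, ‖α j‖ < 1)
    (hα3 : ∀ j, |Complex.arg (α j)| < π / 20)
    (z : ℂ) (hz : ‖z‖ ≤ 1 / 10) :
    ∃ j : Fin d,
      ‖(z - α j * (1 - (‖m‖ : ℂ)) *
            Complex.exp (2 * π * Complex.I * ((j : ℕ) : ℂ) / (d : ℂ))) / m‖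
        < 1 / 10 := by
  obtain ⟨j, k, hjk⟩ := exists_fin_abs_sub_two_pi_mul_div_sub_le (arg z) (by omega : 0 < d)
  refine ⟨j, ?_⟩
  have hπd : π / d ≤ π / 3 :=
    div_le_div_of_nonneg_left pi_pos.le (by norm_num) (by exact_mod_cast hd)
  have hcos : 1 / 3 < Real.cos (arg z - (2 * π * j / d + arg (α j))) := by
    rw [← Real.cos_sub_int_mul_two_pi _ k]
    apply one_third_lt_cos_of_abs_le
    calc |arg z - (2 * π * j / d + arg (α j)) - k * (2 * π)|
        = |(arg z - 2 * π * j / d - 2 * π * k) - arg (α j)| := by ring_nf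
      _ ≤ π / 3 + π / 20 := by
        linarith [abs_sub (arg z - 2 * π * j / d - 2 * π * k) (arg (α j)), hα3 j]
  have hμ : 0 < 1 - ‖m‖ := by linarith
  have hexp : 2 * π * I * ((j : ℕ) : ℂ) / d = ↑(2 * π * j / d) * I := by push_cast; ring
  rw [hexp, show (1 - (‖m‖ : ℂ)) = ↑(1 - ‖m‖) by push_cast; rfl, mul_ofReal_mul_exp_mul_I,
    ← norm_mul_exp_arg_mul_I z, norm_div, div_lt_iff₀ (by linarith)]
  refine lt_of_pow_lt_pow_left₀ 2 (by positivity) ?_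
  rw [norm_ofReal_mul_exp_sub_sq]
  exact sq_add_sq_sub_two_mul_mul_cos_lt (norm_nonneg z) hz hm1
    (mul_lt_mul_of_pos_right (hα1 j) hμ) (mul_lt_of_lt_one_left hμ (hα2 j)) hcos (Real.cos_le_one _)
end

section
/- Let m ∈ ℂ with 0.99 < |m| < 1 and |arg(m) - π/2| < π/50, and let α ∈ ℂ with 0.9 < |α| < 1. Let ℓ_±(z) = m z ± α(1-|m|). Then the four maps ℓ_+∘ℓ_+, ℓ_+∘ℓ_-, ℓ_-∘ℓ_+, ℓ_-∘ℓ_- satisfy the covering property on the disk D(0, 1/10): the union of their images of D(0,1/10) contains the closed disk of radius 1/10. -/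
open Complex Real ComplexConjugate

/-!
Since `ℓ_{s₁} ∘ ℓ_{s₂}` is `w ↦ m² w + c` with `c = (m s₂ + s₁) α (1 - |m|)`, it suffices to choose
the signs so that `|z - c| < |m|² / 10`. Writing `e = 1 - |m|` and `v = z̄ α`, the signs can be
chosen with `Re (z̄ c) = e (|Re (m v)| + |Re v|)`, and as `m` is close to `i` this is at least
`0.81 e |z|`. Because `|c| ≤ 2e`, the cross term `-2 Re (z̄ c)` in `|z - c|²` beats the loss
`|z|² - |m|⁴/100 ≈ |z|² - (1 - 4e)/100` on the whole closed disk.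
-/

lemma abs_re_le_norm_mul_abs_arg_sub_pi_div_two (m : ℂ) :
    |m.re| ≤ ‖m‖ * |arg m - π / 2| := by
  rw [← norm_mul_cos_arg, abs_mul, abs_norm, ← Real.sin_pi_div_two_sub, abs_sub_comm]
  exact mul_le_mul_of_nonneg_left Real.abs_sin_le_abs (norm_nonneg m)

lemma norm_mul_one_sub_sq_div_two_le_im (m : ℂ) :
    ‖m‖ * (1 - (arg m - π / 2) ^ 2 / 2) ≤ m.im := by
  rw [← norm_mul_sin_arg, ← Real.cos_sub_pi_div_two]
  exact mul_le_mul_of_nonneg_left Real.one_sub_sq_div_two_le_cos (norm_nonneg m)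

lemma mul_norm_le_abs_re_mul_add_abs_re {m : ℂ} {κ : ℝ} (hκ : 0 ≤ κ)
    (hre : κ ≤ 1 - |m.re|) (him : κ ≤ m.im) (v : ℂ) :
    κ * ‖v‖ ≤ |(m * v).re| + |v.re| := by
  have hmv : m.im * |v.im| - |m.re| * |v.re| ≤ |(m * v).re| := by
    calc m.im * |v.im| - |m.re| * |v.re| = |m.im * v.im| - |m.re * v.re| := by
          rw [abs_mul, abs_mul, abs_of_nonneg (hκ.trans him)]
      _ ≤ |m.im * v.im - m.re * v.re| := abs_sub_abs_le_abs_sub _ _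
      _ = |(m * v).re| := by rw [mul_re, abs_sub_comm]
  calc κ * ‖v‖ ≤ κ * (|v.re| + |v.im|) :=
        mul_le_mul_of_nonneg_left (norm_le_abs_re_add_abs_im v) hκ
    _ ≤ |(m * v).re| + |v.re| := by
        nlinarith [abs_nonneg v.re, abs_nonneg v.im]

lemma exists_sign_re_mul_eq_abs (u : ℂ) :
    ∃ s ∈ ({1, -1} : Set ℂ), (s * u).re = |u.re| := by
  rcases le_or_gt 0 u.re with h | h
  · exact ⟨1, by simp, by simp [abs_of_nonneg h]⟩
  · exact ⟨-1, by simp, by simp [abs_of_neg h]⟩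

lemma norm_eq_one_of_mem_one_neg_one {s : ℂ} (hs : s ∈ ({1, -1} : Set ℂ)) : ‖s‖ = 1 := by
  rcases hs with rfl | rfl <;> simp

lemma exists_signs_re_conj_mul_eq (z m a : ℂ) :
    ∃ s₁ ∈ ({1, -1} : Set ℂ), ∃ s₂ ∈ ({1, -1} : Set ℂ),
      (conj z * ((m * s₂ + s₁) * a)).re = |(m * (conj z * a)).re| + |(conj z * a).re| := by
  obtain ⟨s₂, hs₂, h₂⟩ := exists_sign_re_mul_eq_abs (m * (conj z * a))
  obtain ⟨s₁, hs₁, h₁⟩ := exists_sign_re_mul_eq_abs (conj z * a)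
  refine ⟨s₁, hs₁, s₂, hs₂, ?_⟩
  rw [← h₁, ← h₂, ← add_re]
  ring_nf

lemma exists_signs_le_re_conj_mul_and_norm_le {m : ℂ} {κ : ℝ} (hκ : 0 ≤ κ)
    (hre : κ ≤ 1 - |m.re|) (him : κ ≤ m.im) (hm : ‖m‖ ≤ 1) (z a : ℂ) :
    ∃ s₁ ∈ ({1, -1} : Set ℂ), ∃ s₂ ∈ ({1, -1} : Set ℂ),
      κ * (‖z‖ * ‖a‖) ≤ (conj z * ((m * s₂ + s₁) * a)).re ∧
        ‖(m * s₂ + s₁) * a‖ ≤ 2 * ‖a‖ := by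
  obtain ⟨s₁, hs₁, s₂, hs₂, hsigns⟩ := exists_signs_re_conj_mul_eq z m a
  refine ⟨s₁, hs₁, s₂, hs₂, ?_, ?_⟩
  · have hv := mul_norm_le_abs_re_mul_add_abs_re hκ hre him (conj z * a)
    rwa [norm_mul, norm_conj, ← hsigns] at hv
  · have hms : ‖m * s₂ + s₁‖ ≤ 2 := by
      calc ‖m * s₂ + s₁‖ ≤ ‖m‖ * ‖s₂‖ + ‖s₁‖ := (norm_add_le _ _).trans_eq (by rw [norm_mul])
        _ ≤ 2 := by
          rw [norm_eq_one_of_mem_one_neg_one hs₁, norm_eq_one_of_mem_one_neg_one hs₂]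
          linarith
    rw [norm_mul]
    exact mul_le_mul_of_nonneg_right hms (norm_nonneg a)

lemma norm_sub_lt_of_le_re_conj_mul {z c : ℂ} {e : ℝ} (hz : ‖z‖ ≤ 1 / 10) (he0 : 0 < e)
    (he1 : e < 1 / 100) (hzc : 81 / 100 * e * ‖z‖ ≤ (conj z * c).re) (hc : ‖c‖ ≤ 2 * e) :
    ‖z - c‖ < (1 - e) ^ 2 / 10 := by
  have hz0 := norm_nonneg z
  have hsq : ‖z - c‖ ^ 2 < ((1 - e) ^ 2 / 10) ^ 2 := by
    rw [norm_sub_sq_real, Complex.inner, mul_comm c]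
    -- the bound is convex in `‖z‖`, so the endpoints `‖z‖ = 0` and `‖z‖ = 1/10` decide it
    nlinarith [mul_nonneg (by linarith : (0:ℝ) ≤ 1 / 10 - ‖z‖) hz0,
      mul_nonneg (by linarith : (0:ℝ) ≤ 1 / 100 - e) (by linarith : (0:ℝ) ≤ 1 / 10 - ‖z‖),
      mul_pos (mul_pos he0 he0) (by linarith : (0:ℝ) < 1 / 100 - e),
      mul_pos he0 (by linarith : (0:ℝ) < 1 / 100 - e), sq_nonneg (e ^ 2),
      pow_le_pow_left₀ (norm_nonneg c) hc 2]
  exact lt_of_pow_lt_pow_left₀ 2 (by positivity) hsq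

/-- Covering property for the two-branch IFS `ℓ_±(z) = mz ± α(1-|m|)` with `m`
nearly imaginary: the four two-fold compositions of `ℓ_+`, `ℓ_-` applied to the
open disk `D(0,1/10)` cover the closed disk of radius `1/10`. -/
theorem stmt4 (m : ℂ) (hm1 : 0.99 < ‖m‖) (hm2 : ‖m‖ < 1)
    (harg : |Complex.arg m - π / 2| < π / 50)
    (α : ℂ) (hα1 : 0.9 < ‖α‖) (hα2 : ‖α‖ < 1)
    (ℓ : ℂ → ℂ → ℂ)
    (hℓ : ∀ s z, ℓ s z = m * z + s * α * (1 - (‖m‖ : ℂ)))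
    (z : ℂ) (hz : ‖z‖ ≤ 1 / 10) :
    ∃ s₁ ∈ ({1, -1} : Set ℂ), ∃ s₂ ∈ ({1, -1} : Set ℂ),
      ∃ w : ℂ, ‖w‖ < 1 / 10 ∧ ℓ s₁ (ℓ s₂ w) = z := by
  have hδ : |arg m - π / 2| < 0.063 := harg.trans (by linarith [Real.pi_lt_d2])
  have hre : |m.re| < 0.063 := by
    nlinarith [abs_re_le_norm_mul_abs_arg_sub_pi_div_two m, abs_nonneg (arg m - π / 2)]
  have him : 0.9 < m.im := by
    nlinarith [norm_mul_one_sub_sq_div_two_le_im m, sq_abs (arg m - π / 2),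
      abs_nonneg (arg m - π / 2)]
  set e : ℝ := 1 - ‖m‖ with he
  obtain ⟨s₁, hs₁, s₂, hs₂, hzc, hc⟩ := exists_signs_le_re_conj_mul_and_norm_le (κ := 0.9)
    (by norm_num) (by linarith) him.le hm2.le z (α * e)
  have hαe : ‖α * e‖ = ‖α‖ * e := by
    rw [norm_mul, norm_real, Real.norm_of_nonneg (by linarith)]
  rw [hαe] at hzc hc
  set c := (m * s₂ + s₁) * (α * e) with hc_def
  have hdist := norm_sub_lt_of_le_re_conj_mul (c := c) (e := e) hz (by linarith) (by linarith)
    (by nlinarith [mul_nonneg (norm_nonneg z) (by linarith : (0:ℝ) ≤ e)]) (by nlinarith)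
  have hm0 : m ≠ 0 := norm_pos_iff.mp (by linarith)
  refine ⟨s₁, hs₁, s₂, hs₂, (z - c) / m ^ 2, ?_, ?_⟩
  · rw [norm_div, norm_pow, div_lt_iff₀ (by positivity)]
    rwa [he, sub_sub_cancel, div_eq_inv_mul, ← one_div] at hdist
  · simp only [hℓ, hc_def, he]
    field_simp
    push_cast
    ring
end

section
/- Let q̃(w̃) = (1/2)κ^{2/3}(8w̃³ - 1), the conjugate of q(w) = w³ - κ under w̃ = (1/2)κ^{-1/3}w. For |κ| sufficiently large, q̃⁻¹(𝔻) has three components, respectively contained in D((1/2)ζ, (1/2)|κ|^{-2/3}) for ζ ∈ {1, j, j²} the cube roots of unity, and each inverse branch q̃_ζ⁻¹ : 𝔻 → 𝔻 satisfies |(q̃_ζ⁻¹)'| ≤ |κ|^{-2/3} on 𝔻. -/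
open Complex Metric Real

/-!
Solving `q̃(w) = x` gives `(2w)³ = 1 + u` with `u = 2x/c²`, so the branches of `q̃⁻¹` are
`w = (ζ/2)·(1 + u)^{1/3}` with the principal cube root, which is holomorphic since `1 + u` stays
in the slit plane. For `|x| < 1` and `|c|² ≥ 20` we have `|u| < 1/10`, where the principal cube
root moves by at most `|u|/2`; this gives the disc estimate. Every preimage lies on one of these
branches because two cube roots of the same number differ by a cube root of unity. The derivative
bound is the inverse function rule `(q̃_ζ⁻¹)' = 1/(12 c² w²)` with `|w|` close to `1/2`.
-/

-- The paper's `q̃`, with `c` a cube root of `κ`, so that `c² = κ^{2/3}`.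
noncomputable def rescaledCubic (c w : ℂ) : ℂ := 1 / 2 * c ^ 2 * (8 * w ^ 3 - 1)

noncomputable def cubeBranch (c ζ x : ℂ) : ℂ := ζ / 2 * (1 + 2 / c ^ 2 * x) ^ (3⁻¹ : ℂ)

theorem norm_one_add_cpow_inv_three_sub_one_le {u : ℂ} (hu : ‖u‖ ≤ 1 / 10) :
    ‖(1 + u) ^ (3⁻¹ : ℂ) - 1‖ ≤ ‖u‖ / 2 := by
  have hu1 : ‖u‖ < 1 := by linarith
  have hlog : ‖log (1 + u)‖ ≤ 19 / 18 * ‖u‖ := by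
    have hinv : (1 - ‖u‖)⁻¹ ≤ 10 / 9 := by
      rw [inv_le_comm₀ (by linarith) (by norm_num)]; linarith
    have := norm_log_one_add_le hu1
    have : ‖u‖ ^ 2 * (1 - ‖u‖)⁻¹ ≤ ‖u‖ * (1 / 10) * (10 / 9) := by
      rw [sq]; gcongr
    linarith
  set w := log (1 + u) * 3⁻¹
  have hw : ‖w‖ ≤ 19 / 54 * ‖u‖ := by
    simp only [w, norm_mul, norm_inv, Complex.norm_ofNat]; linarith
  have hw1 : ‖w‖ ≤ 1 / 20 := by linarith
  rw [cpow_def_of_ne_zero (slitPlane_ne_zero (mem_slitPlane_of_norm_lt_one hu1))]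
  calc ‖exp w - 1‖ ≤ ‖exp w - 1 - w‖ + ‖w‖ := norm_le_norm_sub_add _ _
    _ ≤ ‖w‖ ^ 2 + ‖w‖ := by gcongr; exact norm_exp_sub_one_sub_id_le (by linarith)
    _ ≤ ‖u‖ / 2 := by nlinarith [norm_nonneg w]

theorem hasDerivAt_rescaledCubic (c w : ℂ) :
    HasDerivAt (rescaledCubic c) (12 * c ^ 2 * w ^ 2) w := by
  refine (((hasDerivAt_pow 3 w).const_mul 8).sub_const 1
    |>.const_mul (1 / 2 * c ^ 2)).congr_deriv ?_
  push_cast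
  ring

theorem rescaledCubic_cubeBranch {c ζ : ℂ} (hc : c ≠ 0) (hζ : ζ ^ 3 = 1) (x : ℂ) :
    rescaledCubic c (cubeBranch c ζ x) = x := by
  have := cpow_nat_inv_pow (1 + 2 / c ^ 2 * x) three_ne_zero
  push_cast at this
  simp only [rescaledCubic, cubeBranch, div_pow, mul_pow, this, hζ]
  field_simp
  ring

theorem cubeBranch_eq_mul (c ζ x : ℂ) : cubeBranch c ζ x = ζ * cubeBranch c 1 x := by
  simp only [cubeBranch]; ring

theorem hasDerivAt_cubeBranch {c ζ x : ℂ} (hc : c ≠ 0) (hζ : ζ ^ 3 = 1)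
    (hx : 1 + 2 / c ^ 2 * x ∈ slitPlane) (hg : cubeBranch c ζ x ≠ 0) :
    HasDerivAt (cubeBranch c ζ) (12 * c ^ 2 * cubeBranch c ζ x ^ 2)⁻¹ x := by
  have hroot : ContinuousAt (fun y ↦ (1 + 2 / c ^ 2 * y) ^ (3⁻¹ : ℂ)) x :=
    (continuousAt_cpow_const hx).comp (f := fun y ↦ 1 + 2 / c ^ 2 * y) (by fun_prop)
  have hcont : ContinuousAt (cubeBranch c ζ) x := hroot.const_mul (ζ / 2)
  refine (hasDerivAt_rescaledCubic c _).of_local_left_inverse hcont ?_ ?_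
  · exact mul_ne_zero (mul_ne_zero (by norm_num) (pow_ne_zero 2 hc)) (pow_ne_zero 2 hg)
  · exact Filter.Eventually.of_forall (rescaledCubic_cubeBranch hc hζ)

section LargeParameter

variable {c ζ x : ℂ}

theorem norm_two_div_sq_mul_lt (hc : 20 ≤ ‖c‖ ^ 2) (hx : ‖x‖ < 1) :
    ‖2 / c ^ 2 * x‖ < 2 / ‖c‖ ^ 2 := by
  rw [norm_mul, norm_div, norm_pow, Complex.norm_ofNat]
  exact mul_lt_of_lt_one_right (by positivity) hx

theorem norm_cubeBranch_sub_lt (hc : 20 ≤ ‖c‖ ^ 2) (hζ : ‖ζ‖ = 1) (hx : ‖x‖ < 1) :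
    ‖cubeBranch c ζ x - ζ / 2‖ < 1 / 2 * (‖c‖ ^ 2)⁻¹ := by
  have hu := norm_two_div_sq_mul_lt hc hx
  have hu10 : 2 / ‖c‖ ^ 2 ≤ 1 / 10 := by
    rw [div_le_div_iff₀ (by linarith) (by norm_num)]; linarith
  have hroot := norm_one_add_cpow_inv_three_sub_one_le (hu.le.trans hu10)
  calc ‖cubeBranch c ζ x - ζ / 2‖ = ‖(1 + 2 / c ^ 2 * x) ^ (3⁻¹ : ℂ) - 1‖ / 2 := by
        rw [cubeBranch, ← mul_sub_one, norm_mul, norm_div, hζ, Complex.norm_ofNat]; ring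
    _ < 1 / 2 * (‖c‖ ^ 2)⁻¹ := by linarith [div_eq_mul_inv (2 : ℝ) (‖c‖ ^ 2)]

theorem le_norm_cubeBranch (hc : 20 ≤ ‖c‖ ^ 2) (hζ : ‖ζ‖ = 1) (hx : ‖x‖ < 1) :
    19 / 40 ≤ ‖cubeBranch c ζ x‖ := by
  have hdist := norm_cubeBranch_sub_lt hc hζ hx
  have hinv : (‖c‖ ^ 2)⁻¹ ≤ 1 / 20 := by
    rw [inv_le_comm₀ (by linarith) (by norm_num)]; linarith
  have := norm_sub_norm_le (ζ / 2) (ζ / 2 - cubeBranch c ζ x)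
  rw [sub_sub_cancel, norm_sub_rev, norm_div, hζ, Complex.norm_ofNat] at this
  linarith

theorem hasDerivAt_cubeBranch_of_norm_lt (hc : 20 ≤ ‖c‖ ^ 2) (hζ : ζ ^ 3 = 1)
    (hx : ‖x‖ < 1) :
    HasDerivAt (cubeBranch c ζ) (12 * c ^ 2 * cubeBranch c ζ x ^ 2)⁻¹ x := by
  have hc0 : c ≠ 0 := by rintro rfl; norm_num at hc
  refine hasDerivAt_cubeBranch hc0 hζ (mem_slitPlane_of_norm_lt_one ?_) ?_
  · have hu := norm_two_div_sq_mul_lt hc hx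
    have : 2 / ‖c‖ ^ 2 < 1 := by rw [div_lt_one (by linarith)]; linarith
    linarith
  · have := le_norm_cubeBranch hc (norm_eq_one_of_pow_eq_one hζ three_ne_zero) hx
    rw [← norm_pos_iff]; linarith

theorem norm_inv_twelve_mul_cubeBranch_sq_le (hc : 20 ≤ ‖c‖ ^ 2) (hζ : ‖ζ‖ = 1)
    (hx : ‖x‖ < 1) :
    ‖(12 * c ^ 2 * cubeBranch c ζ x ^ 2)⁻¹‖ ≤ (‖c‖ ^ 2)⁻¹ := by
  have hg := le_norm_cubeBranch hc hζ hx
  rw [norm_inv, norm_mul, norm_mul, norm_pow, norm_pow, Complex.norm_ofNat]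
  have hg12 : 1 ≤ 12 * ‖cubeBranch c ζ x‖ ^ 2 := by nlinarith
  refine inv_anti₀ (by linarith) ?_
  calc ‖c‖ ^ 2 ≤ 12 * ‖cubeBranch c ζ x‖ ^ 2 * ‖c‖ ^ 2 :=
        le_mul_of_one_le_left (by positivity) hg12
    _ = 12 * ‖c‖ ^ 2 * ‖cubeBranch c ζ x‖ ^ 2 := by ring

theorem exists_pow_eq_one_eq_cubeBranch (hc : 20 ≤ ‖c‖ ^ 2) {w : ℂ}
    (hw : ‖rescaledCubic c w‖ < 1) :
    ∃ ζ : ℂ, ζ ^ 3 = 1 ∧ w = cubeBranch c ζ (rescaledCubic c w) := by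
  have hc0 : c ≠ 0 := by rintro rfl; norm_num at hc
  set b := cubeBranch c 1 (rescaledCubic c w)
  have hb : b ≠ 0 := by
    have := le_norm_cubeBranch hc norm_one hw
    rw [← norm_pos_iff]; linarith
  have hcube : w ^ 3 = b ^ 3 := by
    have h : rescaledCubic c b = rescaledCubic c w :=
      rescaledCubic_cubeBranch hc0 (one_pow 3) (rescaledCubic c w)
    have hc2 : (1 / 2 * c ^ 2 : ℂ) ≠ 0 := by simp [hc0]
    linear_combination (-(1 / 8) : ℂ) * mul_left_cancel₀ hc2 h
  refine ⟨w / b, by rw [div_pow, hcube, div_self (pow_ne_zero 3 hb)], ?_⟩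
  rw [cubeBranch_eq_mul, div_mul_cancel₀ w hb]

end LargeParameter

theorem norm_rpow_neg_two_thirds {c κ : ℂ} (h : c ^ 3 = κ) :
    ‖κ‖ ^ (-(2 : ℝ) / 3) = (‖c‖ ^ 2)⁻¹ := by
  rw [← h, norm_pow, ← Real.rpow_natCast, ← Real.rpow_mul (norm_nonneg c)]
  norm_num

/-- Rescaled cubic `q̃(w̃) = (1/2)κ^{2/3}(8w̃³ - 1)` (the conjugate of
`q(w) = w³ - κ` under `w̃ = (1/2)κ^{-1/3} w`): for `|κ|` large, every point of
`q̃⁻¹(𝔻)` lies within `(1/2)|κ|^{-2/3}` of a half cube root of unity `ζ/2`,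
and for each cube root of unity `ζ` there is a holomorphic inverse branch
`q̃_ζ⁻¹ : 𝔻 → D(ζ/2, (1/2)|κ|^{-2/3})` with `|(q̃_ζ⁻¹)'| ≤ |κ|^{-2/3}` on `𝔻`. -/
theorem stmt10 :
    ∃ K > 0, ∀ κ : ℂ, K ≤ ‖κ‖ → ∀ c : ℂ, c ^ 3 = κ →
      (∀ w : ℂ, (1 / 2) * c ^ 2 * (8 * w ^ 3 - 1) ∈ ball (0 : ℂ) 1 →
        ∃ ζ : ℂ, ζ ^ 3 = 1 ∧
          ‖w - ζ / 2‖ < (1 / 2) * ‖κ‖ ^ (-(2 : ℝ) / 3)) ∧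
      (∀ ζ : ℂ, ζ ^ 3 = 1 →
        ∃ g : ℂ → ℂ, DifferentiableOn ℂ g (ball 0 1) ∧
          (∀ x ∈ ball (0 : ℂ) 1,
            (1 / 2) * c ^ 2 * (8 * (g x) ^ 3 - 1) = x ∧
            ‖g x - ζ / 2‖ < (1 / 2) * ‖κ‖ ^ (-(2 : ℝ) / 3)) ∧
          (∀ x ∈ ball (0 : ℂ) 1,
            ‖deriv g x‖ ≤ ‖κ‖ ^ (-(2 : ℝ) / 3))) := by
  refine ⟨125, by norm_num, fun κ hκ c hcκ ↦ ?_⟩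
  have hc : 20 ≤ ‖c‖ ^ 2 := by
    have h5 : 5 ≤ ‖c‖ := by
      refine le_of_pow_le_pow_left₀ three_ne_zero (norm_nonneg c) ?_
      rw [← norm_pow, hcκ]; norm_num [hκ]
    nlinarith
  have hc0 : c ≠ 0 := by rintro rfl; norm_num at hc
  have hunit : ∀ ζ : ℂ, ζ ^ 3 = 1 → ‖ζ‖ = 1 :=
    fun ζ h ↦ norm_eq_one_of_pow_eq_one h three_ne_zero
  simp only [norm_rpow_neg_two_thirds hcκ, mem_ball_zero_iff]
  refine ⟨fun w hw ↦ ?_,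
    fun ζ hζ ↦ ⟨cubeBranch c ζ, fun x hx ↦ ?_, fun x hx ↦ ?_, fun x hx ↦ ?_⟩⟩
  · obtain ⟨ζ, hζ, hwζ⟩ := exists_pow_eq_one_eq_cubeBranch hc hw
    refine ⟨ζ, hζ, ?_⟩
    rw [hwζ]
    exact norm_cubeBranch_sub_lt hc (hunit ζ hζ) hw
  · exact (hasDerivAt_cubeBranch_of_norm_lt hc hζ (mem_ball_zero_iff.mp hx)).differentiableAt
      |>.differentiableWithinAt
  · exact ⟨rescaledCubic_cubeBranch hc0 hζ x, norm_cubeBranch_sub_lt hc (hunit ζ hζ) hx⟩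
  · rw [(hasDerivAt_cubeBranch_of_norm_lt hc hζ hx).deriv]
    exact norm_inv_twelve_mul_cubeBranch_sq_le hc (hunit ζ hζ) hx
end

section
/- Let m ∈ ℂ with 0.99 < |m| < 1 and |m - 1| ≤ 1/10, α = 0.8, j = e^{2πi/3}, and suppose η₁ : D(0,1/10) × 𝔻 → ℂ satisfies |η₁| ≤ (1/100)(1-|m|). Then for every (z̃, w̃) with |z̃| = 1/10, one has |m³ z̃ + α m (1-|m|)(j² + m j + m²) + η₁(z̃,w̃)| < 1/10. -/
open Complex Metric Real

/-- Since `1 + ζ + ζ² = 0`, the quadratic `ζ² + mζ + m²` vanishes at `m = 1`. -/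
lemma sq_add_mul_add_sq_eq_of_isPrimitiveRoot_three {ζ : ℂ} (hζ : IsPrimitiveRoot ζ 3) (m : ℂ) :
    ζ ^ 2 + m * ζ + m ^ 2 = (m - 1) * (ζ + m + 1) := by
  have hsum : 1 + ζ + ζ ^ 2 = 0 := by
    simpa [Finset.sum_range_succ] using hζ.geom_sum_eq_zero (by norm_num)
  linear_combination hsum

lemma norm_sq_add_mul_add_sq_le_of_isPrimitiveRoot_three {ζ m : ℂ} (hζ : IsPrimitiveRoot ζ 3)
    (hm : ‖m‖ ≤ 1) : ‖ζ ^ 2 + m * ζ + m ^ 2‖ ≤ ‖m - 1‖ * 3 := by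
  rw [sq_add_mul_add_sq_eq_of_isPrimitiveRoot_three hζ, norm_mul]
  gcongr
  calc ‖ζ + m + 1‖ ≤ ‖ζ‖ + ‖m‖ + ‖(1 : ℂ)‖ := norm_add₃_le
    _ ≤ 3 := by rw [hζ.norm'_eq_one (by norm_num), norm_one]; linarith

lemma norm_one_sub_ofReal {r : ℝ} (hr : r ≤ 1) : ‖(1 : ℂ) - r‖ = 1 - r := by
  rw [← ofReal_one, ← ofReal_sub, norm_real, Real.norm_of_nonneg (by linarith)]

/-- `1/10 - (a³/10 + (1 - a)/4) = (1 - a)((1 + a + a²)/10 - 1/4)`, positive once `1 + a + a² > 5/2`. -/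
lemma cube_div_ten_add_one_sub_div_four_lt {a : ℝ} (ha : 0.9 ≤ a) (ha' : a < 1) :
    a ^ 3 / 10 + (1 - a) / 4 < 1 / 10 := by
  have h : 0 < 1 - a := by linarith
  nlinarith [mul_pos h (mul_pos (by linarith : (0 : ℝ) < a) (by linarith : (0 : ℝ) < a)),
    mul_pos h (by linarith : (0 : ℝ) < a)]

/-- Boundary contraction estimate for the composed inverse branch
`f̃_{j²}⁻¹ ∘ f̃_j⁻¹ ∘ f̃_1⁻¹` when `|m-1| ≤ 1/10`: its first component maps the
boundary circle `|z̃| = 1/10` strictly inside `D(0,1/10)`, given the error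
bound `|η₁| ≤ (1/100)(1-|m|)`. Here `j = e^{2πi/3}` and `α = 0.8`. -/
theorem stmt13 (m : ℂ) (hm1 : 0.99 < ‖m‖) (hm2 : ‖m‖ < 1)
    (hm3 : ‖m - 1‖ ≤ 1 / 10)
    (η₁ : ℂ × ℂ → ℂ)
    (hη : ∀ z w : ℂ, ‖z‖ ≤ 1 / 10 → ‖w‖ < 1 →
      ‖η₁ (z, w)‖ ≤ (1 / 100) * (1 - ‖m‖)) :
    ∀ z w : ℂ, ‖z‖ = 1 / 10 → ‖w‖ < 1 →
      ‖(m ^ 3 * z + (0.8 : ℂ) * m * (1 - ((‖m‖ : ℝ) : ℂ)) *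
          ((Complex.exp (2 * π * Complex.I / 3)) ^ 2 +
            m * Complex.exp (2 * π * Complex.I / 3) + m ^ 2) + η₁ (z, w))‖
        < 1 / 10 := by
  intro z w hz hw
  set j := Complex.exp (2 * π * Complex.I / 3)
  have hj : IsPrimitiveRoot j 3 := by simpa using Complex.isPrimitiveRoot_exp 3 (by norm_num)
  have hquad : ‖j ^ 2 + m * j + m ^ 2‖ ≤ 3 / 10 :=
    (norm_sq_add_mul_add_sq_le_of_isPrimitiveRoot_three hj hm2.le).trans (by linarith)
  have hmain : ‖(0.8 : ℂ) * m * (1 - ((‖m‖ : ℝ) : ℂ)) * (j ^ 2 + m * j + m ^ 2)‖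
      ≤ 0.8 * (1 - ‖m‖) * (3 / 10) := by
    rw [norm_mul, norm_mul, norm_mul, norm_one_sub_ofReal hm2.le,
      show ‖(0.8 : ℂ)‖ = 0.8 by norm_num]
    calc 0.8 * ‖m‖ * (1 - ‖m‖) * ‖j ^ 2 + m * j + m ^ 2‖
        ≤ 0.8 * 1 * (1 - ‖m‖) * (3 / 10) := by gcongr
      _ = 0.8 * (1 - ‖m‖) * (3 / 10) := by ring
  calc _ ≤ ‖m ^ 3 * z‖ + ‖(0.8 : ℂ) * m * (1 - ((‖m‖ : ℝ) : ℂ)) * (j ^ 2 + m * j + m ^ 2)‖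
          + ‖η₁ (z, w)‖ := norm_add₃_le
    _ ≤ ‖m‖ ^ 3 / 10 + 0.8 * (1 - ‖m‖) * (3 / 10) + 1 / 100 * (1 - ‖m‖) := by
      rw [norm_mul, norm_pow, hz, mul_one_div]
      gcongr
      exact hη z w hz.le hw
    _ = ‖m‖ ^ 3 / 10 + (1 - ‖m‖) / 4 := by ring
    _ < 1 / 10 := cube_div_ten_add_one_sub_div_four_lt (by linarith) hm2
end

section
/- Let E ⊂ ℂ be a compact set with empty interior, let Inn(E) denote the union of bounded components of ℂ \ E and Out(E) the unbounded component, and assume both Inn(E) and Out(E) are nonempty and every point of E is accumulated both by Inn(E) and by Out(E). Suppose there exists μ ∈ ℂ with |μ| = 1, μ not a root of unity, such that for all sufficiently small δ ∈ ℂ: δ ∈ Inn(E) ⟺ μδ ∈ Inn(E), and 0 ∈ E. Then a contradiction follows; i.e., no such E exists. (Equivalently: Inn(E) cannot be invariant near 0 under an irrational rotation about a point of ∂Out(E).) -/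
/-!
Choose `δ ∈ Inn(E)` so close to `0` that the whole orbit `μ ^ m * δ`, `m : ℤ`, stays in `Inn(E)`.
Since `μ` is an irrational rotation, this orbit is dense in the circle `‖z‖ = ‖δ‖`. On the other
hand, a point of `Out(E)` closer to `0` than `δ` lies in an unbounded connected component of `Eᶜ`,
which must cross that circle. The crossing point lies in the open set `Out(E)` and in the closure of
`Inn(E)`, which is impossible as `Inn(E)` and `Out(E)` are disjoint.
-/

open Metric Set

theorem Circle.denseRange_zpow {u : Circle} (hu : ¬IsOfFinOrder u) :
    DenseRange (u ^ · : ℤ → Circle) := by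
  have : Fact ((0 : ℝ) < 1) := ⟨one_pos⟩
  let h := AddCircle.homeomorphCircle (T := 1) one_ne_zero
  have h_zsmul (a : AddCircle (1 : ℝ)) (n : ℤ) : h (n • a) = h a ^ n := by
    simp only [h, AddCircle.homeomorphCircle_apply, AddCircle.toCircle_zsmul]
  obtain ⟨a, rfl⟩ := h.surjective u
  have ha : addOrderOf a = 0 := by
    refine addOrderOf_eq_zero_iff.2 fun ha ↦ hu ?_
    obtain ⟨n, hn, hna⟩ := isOfFinAddOrder_iff_nsmul_eq_zero.1 ha
    refine isOfFinOrder_iff_pow_eq_one.2 ⟨n, hn, ?_⟩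
    rw [← zpow_natCast, ← h_zsmul, natCast_zsmul, hna]
    simp [h, AddCircle.homeomorphCircle_apply]
  have : (h a ^ · : ℤ → Circle) = h ∘ (· • a) := funext fun n ↦ (h_zsmul a n).symm
  rw [this]
  exact h.surjective.denseRange.comp (AddCircle.denseRange_zsmul_iff.2 ha) h.continuous

theorem sphere_subset_closure_range_zpow_mul {u : Circle} (hu : ¬IsOfFinOrder u) (δ : ℂ) :
    sphere 0 ‖δ‖ ⊆ closure (range fun m : ℤ ↦ (u : ℂ) ^ m * δ) := by
  rintro x hx
  obtain ⟨z, rfl⟩ : ∃ z : Circle, (z : ℂ) * δ = x := by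
    rcases eq_or_ne δ 0 with rfl | hδ
    · exact ⟨1, by simp_all⟩
    · refine ⟨⟨x / δ, mem_sphere_zero_iff_norm.2 ?_⟩, div_mul_cancel₀ x hδ⟩
      rw [norm_div, mem_sphere_zero_iff_norm.1 hx, div_self (norm_ne_zero_iff.2 hδ)]
  have hcont : Continuous fun z : Circle ↦ (z : ℂ) * δ := by fun_prop
  have := image_closure_subset_closure_image hcont
    (mem_image_of_mem _ ((Circle.denseRange_zpow hu).closure_range ▸ mem_univ z))
  simpa [← range_comp, Function.comp_def] using this

theorem isOpen_setOf_connectedComponentIn {X : Type*} [TopologicalSpace X]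
    [LocallyConnectedSpace X] {U : Set X} (hU : IsOpen U) (P : Set X → Prop) :
    IsOpen {z | z ∈ U ∧ P (connectedComponentIn U z)} := by
  refine isOpen_iff_forall_mem_open.2 fun z hz ↦ ⟨connectedComponentIn U z, fun y hy ↦ ?_,
    hU.connectedComponentIn, mem_connectedComponentIn hz.1⟩
  exact ⟨connectedComponentIn_subset U z hy, connectedComponentIn_eq hy ▸ hz.2⟩

theorem IsPreconnected.exists_norm_eq {E : Type*} [SeminormedAddCommGroup E] {C : Set E}
    (hC : IsPreconnected C) (hCb : ¬Bornology.IsBounded C) {w : E} (hw : w ∈ C) {ρ : ℝ}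
    (hwρ : ‖w‖ ≤ ρ) : ∃ x ∈ C, ‖x‖ = ρ := by
  obtain ⟨z, hzC, hz⟩ : ∃ z ∈ C, ρ < ‖z‖ := by
    by_contra! h
    exact hCb ((isBounded_closedBall (x := 0) (r := ρ)).subset fun y hy ↦ by simpa using h y hy)
  exact (hC.image _ continuous_norm.continuousOn).Icc_subset (mem_image_of_mem _ hw)
    (mem_image_of_mem _ hzC) ⟨hwρ, hz.le⟩

theorem zpow_mul_mem_of_forall_norm_lt {S : Set ℂ} {μ : ℂ} (hμ : ‖μ‖ = 1) {r : ℝ}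
    (hS : ∀ δ : ℂ, ‖δ‖ < r → (δ ∈ S ↔ μ * δ ∈ S)) {δ : ℂ} (hδS : δ ∈ S) (hδr : ‖δ‖ < r)
    (m : ℤ) : μ ^ m * δ ∈ S := by
  have hμ0 : μ ≠ 0 := norm_ne_zero_iff.1 (hμ ▸ one_ne_zero)
  have hnorm (n : ℤ) : ‖μ ^ n * δ‖ < r := by rwa [norm_mul, norm_zpow, hμ, one_zpow, one_mul]
  induction m using Int.induction_on with
  | zero => simpa using hδS
  | succ n ih => simpa [zpow_add_one₀ hμ0, mul_assoc, mul_left_comm μ] using (hS _ (hnorm n)).1 ih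
  | pred n ih =>
    refine (hS _ (hnorm _)).2 ?_
    simpa [zpow_sub_one₀ hμ0, mul_assoc, mul_left_comm μ, hμ0] using ih

theorem stmt17_general (E : Set ℂ) (hEc : IsCompact E)
    (Inn Out : Set ℂ)
    (hInn : Inn = {z : ℂ | z ∉ E ∧ Bornology.IsBounded (connectedComponentIn Eᶜ z)})
    (hOut : Out = {z : ℂ | z ∉ E ∧ ¬ Bornology.IsBounded (connectedComponentIn Eᶜ z)})
    (hacc : ∀ x ∈ E, x ∈ closure Inn ∧ x ∈ closure Out)
    (h0 : (0 : ℂ) ∈ E)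
    (μ : ℂ) (hμ : ‖μ‖ = 1) (hμroot : ∀ n : ℕ, 0 < n → μ ^ n ≠ 1)
    (hrot : ∃ r > 0, ∀ δ : ℂ, ‖δ‖ < r → (δ ∈ Inn ↔ μ * δ ∈ Inn)) :
    False := by
  obtain ⟨r, hr, hrot⟩ := hrot
  have hOut_open : IsOpen Out := by
    rw [hOut]
    exact isOpen_setOf_connectedComponentIn hEc.isClosed.isOpen_compl (¬Bornology.IsBounded ·)
  obtain ⟨δ, hδInn, hδr⟩ : ∃ δ ∈ Inn, ‖δ‖ < r := by
    simpa using Metric.mem_closure_iff.1 (hacc 0 h0).1 r hr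
  have hδ : 0 < ‖δ‖ := norm_pos_iff.2 fun h ↦ (hInn ▸ hδInn).1 (h ▸ h0)
  obtain ⟨w, hwOut, hwδ⟩ : ∃ w ∈ Out, ‖w‖ < ‖δ‖ := by
    simpa using Metric.mem_closure_iff.1 (hacc 0 h0).2 _ hδ
  rw [hOut] at hwOut
  obtain ⟨x, hxC, hx⟩ := isPreconnected_connectedComponentIn.exists_norm_eq hwOut.2
    (mem_connectedComponentIn hwOut.1) hwδ.le
  have hxOut : x ∈ Out := by
    rw [hOut]
    exact ⟨connectedComponentIn_subset _ _ hxC, connectedComponentIn_eq hxC ▸ hwOut.2⟩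
  let u : Circle := ⟨μ, mem_sphere_zero_iff_norm.2 hμ⟩
  have hu : ¬IsOfFinOrder u := fun h ↦ by
    obtain ⟨n, hn, hun⟩ := isOfFinOrder_iff_pow_eq_one.1 h
    exact hμroot n hn (congrArg Subtype.val hun)
  have hx_cl : x ∈ closure Inn :=
    closure_mono (range_subset_iff.2 (zpow_mul_mem_of_forall_norm_lt hμ hrot hδInn hδr))
      (sphere_subset_closure_range_zpow_mul hu δ (mem_sphere_zero_iff_norm.2 hx))
  obtain ⟨y, hyOut, hyInn⟩ := mem_closure_iff.1 hx_cl Out hOut_open hxOut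
  exact (hOut ▸ hyOut).2 (hInn ▸ hyInn).2

/-- The inner part of the complement of a compact planar set cannot be
invariant near a boundary point under an irrational rotation: if `E ⊂ ℂ` is
compact with empty interior, `Inn(E)` (union of bounded complementary
components) and `Out(E)` (the unbounded component) are both nonempty, every
point of `E` is accumulated by both `Inn(E)` and `Out(E)`, `0 ∈ E`, and there
is `μ` of modulus `1`, not a root of unity, with `δ ∈ Inn(E) ⟺ μδ ∈ Inn(E)`
for all small `δ`, then a contradiction follows. -/
theorem stmt17 (E : Set ℂ) (hEc : IsCompact E) (hEint : interior E = ∅)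
    (Inn Out : Set ℂ)
    (hInn : Inn = {z : ℂ | z ∉ E ∧ Bornology.IsBounded (connectedComponentIn Eᶜ z)})
    (hOut : Out = {z : ℂ | z ∉ E ∧ ¬ Bornology.IsBounded (connectedComponentIn Eᶜ z)})
    (hInne : Inn.Nonempty) (hOute : Out.Nonempty)
    (hacc : ∀ x ∈ E, x ∈ closure Inn ∧ x ∈ closure Out)
    (h0 : (0 : ℂ) ∈ E)
    (μ : ℂ) (hμ : ‖μ‖ = 1) (hμroot : ∀ n : ℕ, 0 < n → μ ^ n ≠ 1)
    (hrot : ∃ r > 0, ∀ δ : ℂ, ‖δ‖ < r → (δ ∈ Inn ↔ μ * δ ∈ Inn)) :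
    False :=
  stmt17_general E hEc Inn Out hInn hOut hacc h0 μ hμ hμroot hrot
end
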